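/- Let m₁, m₂ ∈ ℕ with m₁, m₂ > 0, m = m₁ + m₂, j = diag(I_{m₁}, −I_{m₂}). Let r ∈ ℕ (r ≥ 1), let c₁, …, c_r be distinct reals and A ∈ ℂ^{n×n} with A − cₖIₙ invertible for all k; set B := Σ_{k=1}^r (A − cₖIₙ)⁻¹. Let θ₁ ∈ ℂ^{n×m₁}, θ₂ ∈ ℂ^{n×m₂}, and let C₁, C₂ ∈ ℂ^{n×n} satisfy A·Cᵢ − Cᵢ·A* = i·θᵢ·θᵢ* (i = 1, 2). Define Π(x) := [e^{−ixB}θ₁ e^{ixB}θ₂] (horizontal block concatenation, an n×m matrix) and S(x) := e^{−ixB}·C₁·e^{ixB*} − e^{ixB}·C₂·e^{−ixB*}. Then for all x ∈ ℝ: (i) Π′(x) = −i·Σ_{k=1}^r (A − cₖIₙ)⁻¹·Π(x)·j, and (ii) A·S(x) − S(x)·A* = i·Π(x)·j·Π(x)*. -/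

import Mathlib

/-!
Each resolvent `(A - cₖ)⁻¹` commutes with `A`, hence so do `B` and the exponentials `e^{∓ixB}`,
while `A*` commutes with their adjoints `e^{±ixB*}`. Conjugating `A Cᵢ - Cᵢ A* = i θᵢ θᵢ*` by these
exponentials gives `A S - S A* = i (e^{-ixB}θ₁)(e^{-ixB}θ₁)* - i (e^{ixB}θ₂)(e^{ixB}θ₂)*`, which is
`i Π j Π*`. The derivative of `Π` is computed column block by column block from
`(e^{∓ixB})' = ∓iB e^{∓ixB}`; the sign of the second block is the one produced by `j`.
-/

open Matrix

attribute [local instance] Matrix.normedAddCommGroup Matrix.normedSpace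

/-- The signature matrix `j = diag(I_{m₁}, −I_{m₂})`. -/
def Jmat (m₁ m₂ : ℕ) : Matrix (Fin m₁ ⊕ Fin m₂) (Fin m₁ ⊕ Fin m₂) ℂ :=
  Matrix.fromBlocks 1 0 0 (-1)

open NormedSpace

theorem Commute.ringInverse_right {M₀ : Type*} [MonoidWithZero M₀] {a b : M₀}
    (h : Commute a b) : Commute a (Ring.inverse b) := by
  by_cases hb : IsUnit b
  · obtain ⟨u, rfl⟩ := hb
    rw [Ring.inverse_unit]
    exact h.units_inv_right
  · rw [Ring.inverse_non_unit b hb]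
    exact Commute.zero_right a

namespace Matrix

theorem commute_sum_inv_sub_smul_one {n K ι : Type*} [Fintype n] [DecidableEq n] [CommRing K]
    (A : Matrix n n K) (s : Finset ι) (c : ι → K) : Commute A (∑ k ∈ s, (A - c k • 1)⁻¹) :=
  Commute.sum_right _ _ _ fun k _ => by
    rw [nonsing_inv_eq_ringInverse]
    exact ((Commute.refl A).sub_right ((Commute.one_right A).smul_right (c k))).ringInverse_right

theorem conjTranspose_exp_smul {n 𝕜 : Type*} [Fintype n] [DecidableEq n] [RCLike 𝕜] (z : 𝕜)
    (M : Matrix n n 𝕜) : (exp (z • M))ᴴ = exp (star z • Mᴴ) := by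
  rw [← exp_conjTranspose, conjTranspose_smul]

theorem _root_.Commute.conj_sub_conj_conjTranspose {m n K : Type*} [Fintype m] [Fintype n]
    [CommRing K] [StarRing K] {A E C : Matrix n n K} {θ : Matrix n m K} {z : K}
    (hAE : Commute A E) (hC : A * C - C * Aᴴ = z • (θ * θᴴ)) :
    A * (E * C * Eᴴ) - E * C * Eᴴ * Aᴴ = z • (E * θ * (E * θ)ᴴ) := by
  have hAEH : Commute Aᴴ Eᴴ := hAE.star_star
  calc A * (E * C * Eᴴ) - E * C * Eᴴ * Aᴴ = E * (A * C - C * Aᴴ) * Eᴴ := by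
        simp only [mul_sub, sub_mul, ← Matrix.mul_assoc, hAE.eq]
        simp only [Matrix.mul_assoc, hAEH.eq]
    _ = z • (E * θ * (E * θ)ᴴ) := by
        rw [hC, conjTranspose_mul, Matrix.mul_smul, Matrix.smul_mul]
        simp only [Matrix.mul_assoc]

theorem hasDerivAt_iff {𝕜 α m n : Type*} [NontriviallyNormedField 𝕜] [NormedAddCommGroup α]
    [NormedSpace 𝕜 α] [Fintype m] [Fintype n] {f : 𝕜 → Matrix m n α} {f' : Matrix m n α}
    {t : 𝕜} : HasDerivAt f f' t ↔ ∀ i j, HasDerivAt (fun u => f u i j) (f' i j) t :=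
  hasDerivAt_pi.trans (forall_congr' fun _ => hasDerivAt_pi)

theorem _root_.HasDerivAt.fromCols {𝕜 α m m₁ m₂ : Type*} [NontriviallyNormedField 𝕜]
    [NormedAddCommGroup α] [NormedSpace 𝕜 α] [Fintype m] [Fintype m₁] [Fintype m₂]
    {f : 𝕜 → Matrix m m₁ α} {g : 𝕜 → Matrix m m₂ α} {f' : Matrix m m₁ α} {g' : Matrix m m₂ α}
    {t : 𝕜} (hf : HasDerivAt f f' t) (hg : HasDerivAt g g' t) :
    HasDerivAt (fun u => fromCols (f u) (g u)) (fromCols f' g') t := by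
  rw [hasDerivAt_iff] at hf hg ⊢
  rintro i (j | j)
  · exact hf i j
  · exact hg i j

/- The entrywise sup norm in force here is not submultiplicative, so the derivative of the
exponential is taken for the operator norm and then read off entry by entry. -/
theorem hasDerivAt_exp_smul_apply {n : Type*} [Fintype n] [DecidableEq n]
    (N : Matrix n n ℂ) (t : ℝ) (i j : n) :
    HasDerivAt (fun u : ℝ => exp (u • N) i j) ((N * exp (t • N)) i j) t := by
  let _ : NormedAddCommGroup (Matrix n n ℂ) := Matrix.linftyOpNormedAddCommGroup
  let _ : NormedRing (Matrix n n ℂ) := Matrix.linftyOpNormedRing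
  let _ : NormedAlgebra ℝ (Matrix n n ℂ) := Matrix.linftyOpNormedAlgebra
  let entry : Matrix n n ℂ →L[ℝ] ℂ :=
    LinearMap.toContinuousLinearMap
      { toFun := fun M => M i j, map_add' := fun _ _ => rfl, map_smul' := fun _ _ => rfl }
  exact entry.hasFDerivAt.comp_hasDerivAt t (hasDerivAt_exp_smul_const' N t)

theorem hasDerivAt_exp_ofReal_mul_smul_mul {n m : Type*} [Fintype n] [DecidableEq n]
    [Fintype m] (z : ℂ) (N : Matrix n n ℂ) (θ : Matrix n m ℂ) (t : ℝ) :
    HasDerivAt (fun u : ℝ => exp ((z * u) • N) * θ) (z • (N * exp ((z * t) • N) * θ)) t := by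
  have hsmul : ∀ u : ℝ, (z * u) • N = u • (z • N) := fun u => by
    rw [mul_comm, ← smul_smul, Complex.coe_smul]
  simp only [hsmul]
  refine (hasDerivAt_iff (𝕜 := ℝ) (α := ℂ)).mpr fun i j => ?_
  simp only [mul_apply]
  convert HasDerivAt.fun_sum (u := Finset.univ) fun k _ =>
    (hasDerivAt_exp_smul_apply (z • N) t i k).mul_const (θ k j) using 1
  rw [← Matrix.smul_mul, ← Matrix.smul_mul, ← mul_apply]

end Matrix

theorem fromCols_mul_Jmat {m₁ m₂ : ℕ} {n : Type*} (X : Matrix n (Fin m₁) ℂ)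
    (Y : Matrix n (Fin m₂) ℂ) : fromCols X Y * Jmat m₁ m₂ = fromCols X (-Y) := by
  simp [Jmat, fromCols_mul_fromBlocks]

theorem fromCols_mul_Jmat_mul_conjTranspose {m₁ m₂ : ℕ} {n : Type*} (X : Matrix n (Fin m₁) ℂ)
    (Y : Matrix n (Fin m₂) ℂ) :
    fromCols X Y * Jmat m₁ m₂ * (fromCols X Y)ᴴ = X * Xᴴ - Y * Yᴴ := by
  rw [fromCols_mul_Jmat, conjTranspose_fromCols_eq_fromRows_conjTranspose, fromCols_mul_fromRows,
    Matrix.neg_mul, ← sub_eq_add_neg]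

theorem hasDerivAt_fromCols_exp_mul {m₁ m₂ : ℕ} {n : Type*} [Fintype n] [DecidableEq n]
    (B : Matrix n n ℂ) (θ₁ : Matrix n (Fin m₁) ℂ) (θ₂ : Matrix n (Fin m₂) ℂ) (x : ℝ) :
    HasDerivAt
      (fun t : ℝ => fromCols (exp (-((Complex.I * t) • B)) * θ₁) (exp ((Complex.I * t) • B) * θ₂))
      (-(Complex.I • (B * fromCols (exp (-((Complex.I * x) • B)) * θ₁)
        (exp ((Complex.I * x) • B) * θ₂) * Jmat m₁ m₂))) x := by
  have hderiv := (hasDerivAt_exp_ofReal_mul_smul_mul (-Complex.I) B θ₁ x).fromCols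
    (hasDerivAt_exp_ofReal_mul_smul_mul Complex.I B θ₂ x)
  simp only [neg_mul, neg_smul] at hderiv
  rw [Matrix.mul_assoc, fromCols_mul_Jmat, mul_fromCols]
  convert hderiv using 1
  ext i (j | j) <;> simp [Matrix.mul_assoc]

theorem trivial_hamiltonian_example_general {m₁ m₂ n r : ℕ}
    (c : Fin r → ℝ)
    (A : Matrix (Fin n) (Fin n) ℂ)
    (θ₁ : Matrix (Fin n) (Fin m₁) ℂ) (θ₂ : Matrix (Fin n) (Fin m₂) ℂ)
    (C₁ C₂ : Matrix (Fin n) (Fin n) ℂ)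
    (hC₁ : A * C₁ - C₁ * Aᴴ = Complex.I • (θ₁ * θ₁ᴴ))
    (hC₂ : A * C₂ - C₂ * Aᴴ = Complex.I • (θ₂ * θ₂ᴴ)) :
    let B : Matrix (Fin n) (Fin n) ℂ := ∑ k : Fin r, (A - (c k : ℂ) • 1)⁻¹
    let P : ℝ → Matrix (Fin n) (Fin m₁ ⊕ Fin m₂) ℂ := fun x =>
      fromCols (NormedSpace.exp (-((Complex.I * (x : ℂ)) • B)) * θ₁)
        (NormedSpace.exp ((Complex.I * (x : ℂ)) • B) * θ₂)
    let S : ℝ → Matrix (Fin n) (Fin n) ℂ := fun x =>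
      NormedSpace.exp (-((Complex.I * (x : ℂ)) • B)) * C₁ *
          NormedSpace.exp ((Complex.I * (x : ℂ)) • Bᴴ) -
        NormedSpace.exp ((Complex.I * (x : ℂ)) • B) * C₂ *
          NormedSpace.exp (-((Complex.I * (x : ℂ)) • Bᴴ))
    ∀ x : ℝ,
      HasDerivAt P
        (-(Complex.I • ∑ k : Fin r, (A - (c k : ℂ) • 1)⁻¹ * P x * Jmat m₁ m₂)) x ∧
      A * S x - S x * Aᴴ = Complex.I • (P x * Jmat m₁ m₂ * (P x)ᴴ) := by
  intro B P S x
  have hAB : Commute A B := commute_sum_inv_sub_smul_one A _ _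
  have hstar : star (Complex.I * x) = -(Complex.I * x) := by simp
  have he₁ : (exp (-((Complex.I * x) • B)))ᴴ = exp ((Complex.I * x) • Bᴴ) := by
    rw [← neg_smul, conjTranspose_exp_smul, star_neg, hstar, neg_neg]
  have he₂ : (exp ((Complex.I * x) • B))ᴴ = exp (-((Complex.I * x) • Bᴴ)) := by
    rw [conjTranspose_exp_smul, hstar, neg_smul]
  refine ⟨?_, ?_⟩
  · rw [← Matrix.sum_mul, ← Matrix.sum_mul]
    exact hasDerivAt_fromCols_exp_mul B θ₁ θ₂ x
  · have hS : S x = exp (-((Complex.I * x) • B)) * C₁ * (exp (-((Complex.I * x) • B)))ᴴ -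
        exp ((Complex.I * x) • B) * C₂ * (exp ((Complex.I * x) • B))ᴴ := by
      rw [he₁, he₂]
    rw [hS, mul_sub, sub_mul, sub_sub_sub_comm,
      (hAB.smul_right _).neg_right.exp_right.conj_sub_conj_conjTranspose hC₁,
      (hAB.smul_right _).exp_right.conj_sub_conj_conjTranspose hC₂, ← smul_sub,
      fromCols_mul_Jmat_mul_conjTranspose]

/-- Example 3.3. For the trivial initial Hamiltonians `Hₖ(x) ≡ I_m`,
with `B = Σₖ (A − cₖIₙ)⁻¹`, `A Cᵢ − Cᵢ A* = i θᵢ θᵢ*`,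
`Π(x) = [e^{−ixB}θ₁  e^{ixB}θ₂]` and
`S(x) = e^{−ixB} C₁ e^{ixB*} − e^{ixB} C₂ e^{−ixB*}`, one has
`Π′(x) = −i Σₖ (A − cₖIₙ)⁻¹ Π(x) j` and `A S(x) − S(x) A* = i Π(x) j Π(x)*`. -/
theorem trivial_hamiltonian_example {m₁ m₂ n r : ℕ} (hm₁ : 0 < m₁) (hm₂ : 0 < m₂)
    (hr : 1 ≤ r) (c : Fin r → ℝ) (hc : Function.Injective c)
    (A : Matrix (Fin n) (Fin n) ℂ)
    (hA : ∀ k, IsUnit (A - (c k : ℂ) • (1 : Matrix (Fin n) (Fin n) ℂ)))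
    (θ₁ : Matrix (Fin n) (Fin m₁) ℂ) (θ₂ : Matrix (Fin n) (Fin m₂) ℂ)
    (C₁ C₂ : Matrix (Fin n) (Fin n) ℂ)
    (hC₁ : A * C₁ - C₁ * Aᴴ = Complex.I • (θ₁ * θ₁ᴴ))
    (hC₂ : A * C₂ - C₂ * Aᴴ = Complex.I • (θ₂ * θ₂ᴴ)) :
    let B : Matrix (Fin n) (Fin n) ℂ := ∑ k : Fin r, (A - (c k : ℂ) • 1)⁻¹
    let P : ℝ → Matrix (Fin n) (Fin m₁ ⊕ Fin m₂) ℂ := fun x =>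
      fromCols (NormedSpace.exp (-((Complex.I * (x : ℂ)) • B)) * θ₁)
        (NormedSpace.exp ((Complex.I * (x : ℂ)) • B) * θ₂)
    let S : ℝ → Matrix (Fin n) (Fin n) ℂ := fun x =>
      NormedSpace.exp (-((Complex.I * (x : ℂ)) • B)) * C₁ *
          NormedSpace.exp ((Complex.I * (x : ℂ)) • Bᴴ) -
        NormedSpace.exp ((Complex.I * (x : ℂ)) • B) * C₂ *
          NormedSpace.exp (-((Complex.I * (x : ℂ)) • Bᴴ))
    ∀ x : ℝ,
      HasDerivAt P
        (-(Complex.I • ∑ k : Fin r, (A - (c k : ℂ) • 1)⁻¹ * P x * Jmat m₁ m₂)) x ∧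
      A * S x - S x * Aᴴ = Complex.I • (P x * Jmat m₁ m₂ * (P x)ᴴ) :=
  trivial_hamiltonian_example_general c A θ₁ θ₂ C₁ C₂ hC₁ hC₂
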